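/- Let c, d ∈ ℝ, A₀ > 0, and let F : (A₀, ∞) → ℝ satisfy F(A) = (1/2)A − π log A + c − d A^(−1/2) + ρ(A) where ρ(A) = o(A^(−1/2)) as A → ∞. Suppose A : (V₀, ∞) → (A₀, ∞) satisfies F(A(V)) = V for all V > V₀ and A(V) → ∞ as V → ∞. Then A(V) = 2V + 2π log(2V) − 2c + √2 · d · V^(−1/2) + o(V^(−1/2)) as V → ∞. (Applied with c = V(M,g) + π(1 + log π) and d = 8π^(3/2)·𝐦, this inverts the volume expansion of the isoperimetric profile and yields A_g(V) = A_ḡ(V) − 2V(M,g) + 8√2 π^(3/2) 𝐦 V^(−1/2) + o(V^(−1/2)).) -/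

import Mathlib

/-!
Put `g a = 2π log a - 2c + 2d a^(-1/2) - 2ρ a`; then `F (A V) = V` says `A = 2V + g ∘ A`.
Since `g a = o(a^(1/2))` and `A → ∞`, this gives first `A ∼ 2V` and then `A - 2V = o(V^(1/2))`.
Substituting back, the error term equals
`2π log (A / 2V) + 2d (A^(-1/2) - (2V)^(-1/2)) - 2ρ(A)`, and each summand is `o(V^(-1/2))`:
`log (A / 2V) = O((A - 2V) / V)`, `A^(-1/2) ∼ (2V)^(-1/2)`, and `ρ(A) = o(A^(-1/2)) = o(V^(-1/2))`.
-/

open Real Filter Asymptotics Topology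

lemma isLittleO_rpow_rpow_atTop {p q : ℝ} (h : p < q) :
    (fun x : ℝ => x ^ p) =o[atTop] fun x => x ^ q := by
  rw [isLittleO_iff_tendsto']
  · refine (tendsto_rpow_neg_atTop (sub_pos.2 h)).congr' ?_
    filter_upwards [eventually_gt_atTop 0] with x hx
    rw [neg_sub, rpow_sub hx]
  · filter_upwards [eventually_gt_atTop 0] with x hx h0
    exact absurd h0 (rpow_pos_of_pos hx q).ne'

lemma isBigO_const_mul_rpow_atTop {k : ℝ} (hk : 0 ≤ k) (r : ℝ) :
    (fun x : ℝ => (k * x) ^ r) =O[atTop] fun x => x ^ r := by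
  refine ((isBigO_refl _ _).const_mul_left (k ^ r)).congr' ?_ EventuallyEq.rfl
  filter_upwards [eventually_ge_atTop 0] with x hx
  exact (mul_rpow hk hx).symm

lemma sqrt_two_mul_rpow_neg_half {x : ℝ} (hx : 0 ≤ x) :
    √2 * x ^ (-(1:ℝ)/2) = 2 * (2 * x) ^ (-(1:ℝ)/2) := by
  rw [mul_rpow zero_le_two hx, ← mul_assoc, sqrt_eq_rpow, ← rpow_one_add' zero_le_two (by norm_num)]
  norm_num

lemma log_sub_add_rpow_sub_isLittleO_sqrt (b c d : ℝ) {ρ : ℝ → ℝ}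
    (hρ : ρ =o[atTop] fun a : ℝ => a ^ (-(1:ℝ)/2)) :
    (fun a => b * log a - c + d * a ^ (-(1:ℝ)/2) - ρ a) =o[atTop] fun a : ℝ => a ^ ((1:ℝ)/2) := by
  have hpow := isLittleO_rpow_rpow_atTop (by norm_num : -(1:ℝ)/2 < 1/2)
  have hlog := (isLittleO_log_rpow_atTop (by norm_num : (0:ℝ) < 1/2)).const_mul_left b
  have hconst : (fun _ : ℝ => c) =o[atTop] fun a : ℝ => a ^ ((1:ℝ)/2) :=
    isLittleO_const_left.2 <| Or.inr <|
      tendsto_norm_atTop_atTop.comp (tendsto_rpow_atTop (by norm_num))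
  exact ((hlog.sub hconst).add (hpow.const_mul_left d)).sub (hρ.trans hpow)

namespace Asymptotics

lemma IsLittleO.div_const_mul_self {f : ℝ → ℝ} {p : ℝ} (hf : f =o[atTop] fun x => x ^ p)
    (k : ℝ) : (fun x => f x / (k * x)) =o[atTop] fun x => x ^ (p - 1) := by
  refine ((hf.mul_isBigO (isBigO_refl (fun x : ℝ => x⁻¹) atTop)).const_mul_left k⁻¹).congr'
    (Eventually.of_forall fun x => by ring) ?_
  filter_upwards [eventually_gt_atTop 0] with x hx
  rw [rpow_sub_one hx.ne', div_eq_mul_inv]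

section

variable {α : Type*} {l : Filter α} {u v : α → ℝ}

lemma IsEquivalent.rpow_of_eventually_nonneg (hv : ∀ᶠ x in l, 0 ≤ v x) (h : u ~[l] v) (r : ℝ) :
    (fun x => u x ^ r) ~[l] fun x => v x ^ r := by
  have hmax : v =ᶠ[l] fun x => max (v x) 0 := hv.mono fun x hx => (max_eq_left hx).symm
  refine ((h.congr_right hmax).rpow (fun x => le_max_right (v x) 0) (r := r)).congr_right ?_
  filter_upwards [hmax] with x hx
  simp only [Pi.pow_apply, ← hx]

lemma IsEquivalent.log_sub_log_isBigO (h : u ~[l] v) (hv : ∀ᶠ x in l, 0 < v x) :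
    (fun x => Real.log (u x) - Real.log (v x)) =O[l] fun x => (u x - v x) / v x := by
  have hdiv : Tendsto (u / v) l (𝓝 1) :=
    (isEquivalent_iff_tendsto_one (hv.mono fun x hx => hx.ne')).1 h
  have hu : ∀ᶠ x in l, 0 < u x := by
    filter_upwards [hdiv.eventually (eventually_gt_nhds one_pos), hv] with x hx hvx
    exact (div_pos_iff_of_pos_right hvx).1 hx
  refine ((hasDerivAt_log one_ne_zero).isBigO_sub.comp_tendsto hdiv).congr' ?_ ?_
  · filter_upwards [hu, hv] with x hux hvx
    simp [log_div hux.ne' hvx.ne']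
  · filter_upwards [hv] with x hvx
    simp [sub_div, div_self hvx.ne']

lemma isEquivalent_of_eq_add_comp {A w : α → ℝ} {g : ℝ → ℝ} (hg : g =o[atTop] fun a => a)
    (hA : Tendsto A l atTop) (hfix : ∀ᶠ x in l, A x = w x + g (A x)) : A ~[l] w := by
  refine IsEquivalent.symm (IsLittleO.isEquivalent ?_)
  refine (hg.comp_tendsto hA).neg_left.congr' ?_ EventuallyEq.rfl
  filter_upwards [hfix] with x hx
  simp only [Function.comp_apply, Pi.sub_apply]
  linarith

end

variable {A : ℝ → ℝ} {k : ℝ}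

lemma IsEquivalent.rpow_const_mul (hk : 0 ≤ k) (h : A ~[atTop] fun x => k * x) (r : ℝ) :
    (fun x => A x ^ r) ~[atTop] fun x => (k * x) ^ r :=
  h.rpow_of_eventually_nonneg
    (by filter_upwards [eventually_ge_atTop 0] with x hx; positivity) r

lemma IsEquivalent.rpow_isBigO_rpow (hk : 0 ≤ k) (h : A ~[atTop] fun x => k * x) (r : ℝ) :
    (fun x => A x ^ r) =O[atTop] fun x => x ^ r :=
  (h.rpow_const_mul hk r).isBigO.trans (isBigO_const_mul_rpow_atTop hk r)

lemma IsEquivalent.sub_isLittleO_rpow_of_eq_add_comp {g : ℝ → ℝ} {p : ℝ} (hk : 0 ≤ k)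
    (h : A ~[atTop] fun x => k * x) (hg : g =o[atTop] fun a => a ^ p)
    (hA : Tendsto A atTop atTop) (hfix : ∀ᶠ x in atTop, A x = k * x + g (A x)) :
    (fun x => A x - k * x) =o[atTop] fun x => x ^ p := by
  refine ((hg.comp_tendsto hA).trans_isBigO (h.rpow_isBigO_rpow hk p)).congr' ?_ EventuallyEq.rfl
  filter_upwards [hfix] with x hx
  simp only [Function.comp_apply]
  linarith

end Asymptotics

theorem profile_inversion (c d A₀ V₀ : ℝ) (F ρ : ℝ → ℝ)
    (hF : ∀ A > A₀, F A = (1 / 2) * A - π * Real.log A + c - d * A ^ (-(1:ℝ)/2) + ρ A)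
    (hρ : ρ =o[atTop] fun A : ℝ => A ^ (-(1:ℝ)/2))
    (A : ℝ → ℝ)
    (hrange : ∀ V > V₀, A₀ < A V)
    (hinv : ∀ V > V₀, F (A V) = V)
    (htend : Tendsto A atTop atTop) :
    (fun V => A V - (2 * V + 2 * π * Real.log (2 * V) - 2 * c
        + Real.sqrt 2 * d * V ^ (-(1:ℝ)/2)))
      =o[atTop] fun V : ℝ => V ^ (-(1:ℝ)/2) := by
  set g : ℝ → ℝ := fun a => 2 * π * log a - 2 * c + 2 * d * a ^ (-(1:ℝ)/2) - 2 * ρ a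
  have hfix : ∀ᶠ V in atTop, A V = 2 * V + g (A V) := by
    filter_upwards [eventually_gt_atTop V₀] with V hV
    have h := hinv V hV
    rw [hF (A V) (hrange V hV)] at h
    simp only [g]
    linarith
  have hg : g =o[atTop] fun a : ℝ => a ^ ((1:ℝ)/2) :=
    log_sub_add_rpow_sub_isLittleO_sqrt _ _ _ (hρ.const_mul_left 2)
  have hequiv : A ~[atTop] fun V => 2 * V :=
    isEquivalent_of_eq_add_comp
      (hg.trans (by simpa using isLittleO_rpow_rpow_atTop (by norm_num : (1:ℝ)/2 < 1))) htend hfix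
  have herr := hequiv.sub_isLittleO_rpow_of_eq_add_comp zero_le_two hg htend hfix
  have hlog : (fun V => log (A V) - log (2 * V)) =o[atTop] fun V : ℝ => V ^ (-(1:ℝ)/2) := by
    refine (hequiv.log_sub_log_isBigO ?_).trans_isLittleO ?_
    · filter_upwards [eventually_gt_atTop 0] with V hV; positivity
    · simpa only [show (1:ℝ)/2 - 1 = -1/2 by norm_num] using herr.div_const_mul_self 2
  have hrpow : (fun V => A V ^ (-(1:ℝ)/2) - (2 * V) ^ (-(1:ℝ)/2)) =o[atTop]
      fun V : ℝ => V ^ (-(1:ℝ)/2) :=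
    (hequiv.rpow_const_mul zero_le_two _).isLittleO.trans_isBigO
      (isBigO_const_mul_rpow_atTop zero_le_two _)
  have hρA : (fun V => ρ (A V)) =o[atTop] fun V : ℝ => V ^ (-(1:ℝ)/2) :=
    (hρ.comp_tendsto htend).trans_isBigO (hequiv.rpow_isBigO_rpow zero_le_two _)
  refine (((hlog.const_mul_left (2 * π)).add (hrpow.const_mul_left (2 * d))).sub
    (hρA.const_mul_left 2)).congr' ?_ EventuallyEq.rfl
  filter_upwards [hfix, eventually_gt_atTop 0] with V hV hV0
  simp only [g] at hV
  linear_combination d * sqrt_two_mul_rpow_neg_half hV0.le - hV
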